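/- Let (C,d) be a bigraded complex over a field k, and let C_1 = H(C, d_0) be the homology of C with respect to the filtration-preserving component d_0 of the differential, regarded as a bigraded k-vector space with the gradings induced by u and f. Then there exists a k-linear differential d̄ on C_1 which strictly decreases the filtration grading and decreases the homological grading by 1 (so that (C_1, d̄) is a bigraded complex whose filtration-degree-0 component vanishes), together with chain maps φ: (C_1, d̄) → (C, d) and ψ: (C, d) → (C_1, d̄) which preserve the homological grading and do not increase the filtration grading, and chain homotopies H: C → C and H': C_1 → C_1 which raise the homological grading by 1 and do not increase the filtration grading, such that ψ∘φ − id = d̄∘H' + H'∘d̄ and φ∘ψ − id = d∘H + H∘d. In other words, (C_1, d̄) is filtered chain homotopy equivalent to (C, d). -/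

import Mathlib

/-!
Gaussian elimination.  If `d eᵢ₀` has a nonzero coefficient `x` on `eⱼ₀` and `f j₀ = f i₀`,
let `ℓ` be the `j₀`-th coordinate and `h v = -(ℓ v / x) • eᵢ₀`.  Then `h² = 0` and `hdh = -h`,
so `p = 1 + dh + hd` is an idempotent chain map homotopic to the identity; `p` kills `eᵢ₀` and
lands in `ker ℓ`, so its image is a copy of the span of the other basis vectors, and all maps
involved are filtered because the cancelled entry preserves the filtration.  Iterating gives a
filtered strong deformation retraction of `(C, d)` onto a complex `(C₁, d̄)` with no
filtration-preserving entries left.  Taking filtration-preserving components is multiplicative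
on filtered maps, so it turns this retraction into one of `(C, d₀)` onto `(C₁, 0)`, which
identifies `C₁` with `H(C, d₀)` in each bidegree.
-/

abbrev bidegPiece (k : Type*) [Field k] {ι : Type*} [Fintype ι] [DecidableEq ι]
    (u f : ι → ℤ) (n j : ℤ) : Submodule k (ι → k) :=
  Submodule.span k {v : ι → k | ∃ i, u i = n ∧ f i = j ∧ v = Pi.single i 1}

abbrev bidegHomology (k : Type*) [Field k] {ι : Type*} [Fintype ι] [DecidableEq ι]
    (u f : ι → ℤ) (D0 : (ι → k) →ₗ[k] (ι → k)) (n j : ℤ) :=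
  ↥(LinearMap.ker D0 ⊓ bidegPiece k u f n j) ⧸
    (Submodule.map D0 (bidegPiece k u f (n + 1) j)).comap
      (LinearMap.ker D0 ⊓ bidegPiece k u f n j).subtype

section Reduction

variable {R V W X : Type*} [Ring R] [AddCommGroup V] [Module R V] [AddCommGroup W] [Module R W]
  [AddCommGroup X] [Module R X]

theorem comp_comm_of_sub_id_eq {d H P : V →ₗ[R] V} (hd : d ∘ₗ d = 0)
    (hP : P - LinearMap.id = d ∘ₗ H + H ∘ₗ d) : P ∘ₗ d = d ∘ₗ P := by
  rw [sub_eq_iff_eq_add] at hP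
  simp only [← Module.End.mul_eq_comp, ← Module.End.one_eq_id] at hd hP ⊢
  calc P * d = d * H * d + H * (d * d) + d := by rw [hP]; noncomm_ring
    _ = d * (d * H) + d * H * d + d := by rw [hd, ← mul_assoc, hd]; noncomm_ring
    _ = d * P := by rw [hP]; noncomm_ring

theorem isIdempotentElem_id_add_comp_add_comp {d h : V →ₗ[R] V} (hd : d ∘ₗ d = 0)
    (hh : h ∘ₗ h = 0) (hdh : h ∘ₗ d ∘ₗ h = -h) :
    IsIdempotentElem (LinearMap.id + d ∘ₗ h + h ∘ₗ d) := by
  simp only [IsIdempotentElem, ← Module.End.mul_eq_comp, ← Module.End.one_eq_id] at *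
  calc (1 + d * h + h * d) * (1 + d * h + h * d)
      = 1 + 2 * (d * h + h * d) + d * (h * (d * h)) + h * (d * h) * d + d * (h * h) * d
          + h * (d * d) * h := by noncomm_ring
    _ = 1 + d * h + h * d := by rw [hdh, hh, hd]; noncomm_ring

/-- A strong deformation retraction of the complex `(V, d)` onto `(W, d')`. -/
structure Reduction (d : V →ₗ[R] V) (d' : W →ₗ[R] W) where
  φ : W →ₗ[R] V
  ψ : V →ₗ[R] W
  H : V →ₗ[R] V
  φ_comp_d : φ ∘ₗ d' = d ∘ₗ φ
  ψ_comp_d : ψ ∘ₗ d = d' ∘ₗ ψ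
  ψ_comp_φ : ψ ∘ₗ φ = LinearMap.id
  φ_comp_ψ_sub : φ ∘ₗ ψ - LinearMap.id = d ∘ₗ H + H ∘ₗ d

namespace Reduction

variable {d : V →ₗ[R] V} {d' : W →ₗ[R] W} {d'' : X →ₗ[R] X}

theorem φ_comp_d_apply (r : Reduction d d') (w : W) : r.φ (d' w) = d (r.φ w) :=
  LinearMap.congr_fun r.φ_comp_d w

theorem ψ_comp_d_apply (r : Reduction d d') (v : V) : r.ψ (d v) = d' (r.ψ v) :=
  LinearMap.congr_fun r.ψ_comp_d v

theorem ψ_comp_φ_apply (r : Reduction d d') (w : W) : r.ψ (r.φ w) = w :=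
  LinearMap.congr_fun r.ψ_comp_φ w

theorem φ_comp_ψ_apply (r : Reduction d d') (v : V) : r.φ (r.ψ v) = v + d (r.H v) + r.H (d v) := by
  have := LinearMap.congr_fun r.φ_comp_ψ_sub v
  simp only [LinearMap.sub_apply, LinearMap.add_apply, LinearMap.comp_apply,
    LinearMap.id_apply, sub_eq_iff_eq_add'] at this
  rw [this, add_assoc]

theorem eq_ψ_comp_d_comp_φ (r : Reduction d d') : d' = r.ψ ∘ₗ d ∘ₗ r.φ := by
  ext w
  simp [← r.φ_comp_d_apply, r.ψ_comp_φ_apply]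

theorem comp_self_eq_zero (r : Reduction d d') (hd : d ∘ₗ d = 0) : d' ∘ₗ d' = 0 := by
  have hd' (v : V) : d (d v) = 0 := LinearMap.congr_fun hd v
  ext w
  simp [r.eq_ψ_comp_d_comp_φ, r.φ_comp_ψ_apply, hd']

def ofHomotopy (d : V →ₗ[R] V) (φ : W →ₗ[R] V) (ψ : V →ₗ[R] W) (H : V →ₗ[R] V)
    (hd : d ∘ₗ d = 0) (hψφ : ψ ∘ₗ φ = LinearMap.id)
    (hφψ : φ ∘ₗ ψ - LinearMap.id = d ∘ₗ H + H ∘ₗ d) : Reduction d (ψ ∘ₗ d ∘ₗ φ) :=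
  have hψφ' (w : W) : ψ (φ w) = w := LinearMap.congr_fun hψφ w
  have hcomm (v : V) : φ (ψ (d v)) = d (φ (ψ v)) :=
    LinearMap.congr_fun (comp_comm_of_sub_id_eq hd hφψ) v
  { φ, ψ, H
    φ_comp_d := by ext w; simpa [hψφ'] using hcomm (φ w)
    ψ_comp_d := by ext v; simpa [hψφ'] using congrArg ψ (hcomm v)
    ψ_comp_φ := hψφ
    φ_comp_ψ_sub := hφψ }

def trans (r₁ : Reduction d d') (r₂ : Reduction d' d'') : Reduction d d'' where
  φ := r₁.φ ∘ₗ r₂.φ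
  ψ := r₂.ψ ∘ₗ r₁.ψ
  H := r₁.H + r₁.φ ∘ₗ r₂.H ∘ₗ r₁.ψ
  φ_comp_d := by ext x; simp [r₂.φ_comp_d_apply, r₁.φ_comp_d_apply]
  ψ_comp_d := by ext v; simp [r₂.ψ_comp_d_apply, r₁.ψ_comp_d_apply]
  ψ_comp_φ := by ext x; simp [r₂.ψ_comp_φ_apply, r₁.ψ_comp_φ_apply]
  φ_comp_ψ_sub := by
    ext v
    simp [r₂.φ_comp_ψ_apply, r₁.φ_comp_ψ_apply, r₁.ψ_comp_d_apply, r₁.φ_comp_d_apply]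
    abel

noncomputable def homologyEquiv (r : Reduction d d') (hd' : d' = 0) (P : Submodule R W)
    (Vn Vn1 : Submodule R V) (hφ : ∀ w ∈ P, r.φ w ∈ Vn) (hψ : ∀ v ∈ Vn, r.ψ v ∈ P)
    (hH : ∀ v ∈ Vn, r.H v ∈ Vn1) :
    (↥(LinearMap.ker d ⊓ Vn) ⧸ (Vn1.map d).comap (LinearMap.ker d ⊓ Vn).subtype) ≃ₗ[R] P :=
  let Z := LinearMap.ker d ⊓ Vn
  let π : Z →ₗ[R] P := (r.ψ ∘ₗ Z.subtype).codRestrict P fun z => hψ z (z.2.2)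
  have hπ : Function.Surjective π := fun w => by
    refine ⟨⟨r.φ w, ?_, hφ w w.2⟩, Subtype.ext (r.ψ_comp_φ_apply w)⟩
    simp [LinearMap.mem_ker, ← r.φ_comp_d_apply, hd']
  have hker : LinearMap.ker π = (Vn1.map d).comap Z.subtype := by
    ext ⟨z, hzd, hzV⟩
    replace hzd : d z = 0 := hzd
    simp only [LinearMap.mem_ker, Submodule.mem_comap, Submodule.subtype_apply,
      Submodule.mem_map]
    constructor
    · intro hz
      have hψz : r.ψ z = 0 := congrArg Subtype.val hz
      refine ⟨-r.H z, Submodule.neg_mem _ (hH z hzV), ?_⟩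
      have := r.φ_comp_ψ_apply z
      rw [hψz, hzd, map_zero, map_zero, add_zero] at this
      rw [map_neg, neg_eq_iff_add_eq_zero, add_comm, ← this]
    · rintro ⟨y, -, rfl⟩
      exact Subtype.ext ((r.ψ_comp_d_apply y).trans (by simp [hd']))
  (Submodule.quotEquivOfEq _ _ hker.symm).trans (π.quotKerEquivOfSurjective hπ)

end Reduction

end Reduction

section FilteredMap

variable {R : Type*} [Semiring R] {α β γ : Type*}

theorem LinearMap.apply_eq_sum_single [Fintype α] [DecidableEq α] {M : Type*} [AddCommMonoid M]
    [Module R M] (g : (α → R) →ₗ[R] M) (v : α → R) : g v = ∑ i, v i • g (Pi.single i 1) := by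
  conv_lhs => rw [← Finset.univ_sum_single v, map_sum]
  refine Finset.sum_congr rfl fun i _ => ?_
  rw [← map_smul, ← Pi.single_smul', smul_eq_mul, mul_one]

theorem LinearMap.comp_single_apply [DecidableEq α] [Fintype β] [DecidableEq β]
    (g : (α → R) →ₗ[R] (β → R)) (g' : (β → R) →ₗ[R] (γ → R)) (i : α) (j : γ) :
    (g' ∘ₗ g) (Pi.single i 1) j = ∑ m, g (Pi.single i 1) m * g' (Pi.single m 1) j := by
  rw [LinearMap.comp_apply, g'.apply_eq_sum_single]
  simp

theorem LinearMap.ext_single [Finite α] [DecidableEq α] {M : Type*} [AddCommMonoid M]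
    [Module R M] {g g' : (α → R) →ₗ[R] M}
    (h : ∀ i, g (Pi.single i 1) = g' (Pi.single i 1)) : g = g' := by
  ext i
  exact h i

theorem Pi.single_comp_symm {M : Type*} [Zero M] [DecidableEq α] [DecidableEq β] (e : α ≃ β)
    (a : α) (x : M) : Pi.single a x ∘ e.symm = Pi.single (e a) x := by
  ext j
  simp [Pi.single_apply, Equiv.symm_apply_eq]

theorem LinearMap.extendByZero_funLeft_val_apply {p : α → Prop} [DecidablePred p]
    (v : α → R) (m : α) :
    Function.ExtendByZero.linearMap R Subtype.val
        (LinearMap.funLeft R R (Subtype.val : Subtype p → α) v) m = if p m then v m else 0 := by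
  rw [Function.ExtendByZero.linearMap_apply]
  split_ifs with hm
  · simp [Function.extend_val_apply hm, LinearMap.funLeft_apply]
  · simp [Function.extend_val_apply' hm]

theorem LinearMap.funLeft_val_comp_extendByZero (p : α → Prop) :
    LinearMap.funLeft R R (Subtype.val : Subtype p → α) ∘ₗ
      Function.ExtendByZero.linearMap R Subtype.val = LinearMap.id := by
  ext w m
  simp [LinearMap.funLeft_apply]

def IsFilteredMap [DecidableEq α] (uα fα : α → ℤ) (uβ fβ : β → ℤ) (s : ℤ)
    (g : (α → R) →ₗ[R] (β → R)) : Prop :=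
  ∀ i j, g (Pi.single i 1) j ≠ 0 → uβ j = uα i + s ∧ fβ j ≤ fα i

namespace IsFilteredMap

variable [DecidableEq α] {uα fα : α → ℤ} {uβ fβ : β → ℤ} {uγ fγ : γ → ℤ} {s t n : ℤ}
  {g g₁ : (α → R) →ₗ[R] (β → R)} {g' : (β → R) →ₗ[R] (γ → R)}

theorem id (u f : α → ℤ) : IsFilteredMap u f u f 0 (LinearMap.id : (α → R) →ₗ[R] (α → R)) := by
  intro i j h
  obtain rfl : j = i := by by_contra hji; simp [Pi.single_eq_of_ne hji] at h
  simp

theorem zero : IsFilteredMap uα fα uβ fβ s (0 : (α → R) →ₗ[R] (β → R)) := by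
  simp [IsFilteredMap]

theorem add (hg : IsFilteredMap uα fα uβ fβ s g) (hg₁ : IsFilteredMap uα fα uβ fβ s g₁) :
    IsFilteredMap uα fα uβ fβ s (g + g₁) := by
  intro i j h
  by_cases h₀ : g (Pi.single i 1) j = 0
  · exact hg₁ i j (by simpa [h₀] using h)
  · exact hg i j h₀

theorem funLeft [DecidableEq β] (σ : β → α) (u f : α → ℤ) :
    IsFilteredMap u f (u ∘ σ) (f ∘ σ) 0 (LinearMap.funLeft R R σ) := by
  intro i j h
  obtain rfl : σ j = i := by by_contra hji; simp [Pi.single_eq_of_ne hji] at h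
  simp

theorem extendByZero {p : α → Prop} (u f : α → ℤ) :
    IsFilteredMap (u ∘ Subtype.val) (f ∘ Subtype.val) u f 0
      (Function.ExtendByZero.linearMap R (Subtype.val : Subtype p → α)) := by
  intro m i h
  by_cases hi : p i
  · rw [Function.ExtendByZero.linearMap_apply, Function.extend_val_apply hi] at h
    obtain rfl : (⟨i, hi⟩ : Subtype p) = m := by by_contra hne; simp [Pi.single_eq_of_ne hne] at h
    simp
  · simp [Function.extend_val_apply' hi] at h

theorem comp [Fintype β] [DecidableEq β] (hg' : IsFilteredMap uβ fβ uγ fγ t g')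
    (hg : IsFilteredMap uα fα uβ fβ s g) (hn : s + t = n := by norm_num) :
    IsFilteredMap uα fα uγ fγ n (g' ∘ₗ g) := by
  intro i j h
  rw [LinearMap.comp_single_apply] at h
  obtain ⟨m, -, hm⟩ := Finset.exists_ne_zero_of_sum_ne_zero h
  have h₁ := hg i m (left_ne_zero_of_mul hm)
  have h₂ := hg' m j (right_ne_zero_of_mul hm)
  exact ⟨by omega, h₂.2.trans h₁.2⟩

end IsFilteredMap

/-- The filtration-preserving component of `g`; for `g = d` this is the paper's `d₀`. -/
def gr [Fintype α] [DecidableEq α] (fα : α → ℤ) (fβ : β → ℤ) (g : (α → R) →ₗ[R] (β → R)) :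
    (α → R) →ₗ[R] (β → R) :=
  Fintype.linearCombination R fun i j => if fβ j = fα i then g (Pi.single i 1) j else 0

variable [Fintype α] [DecidableEq α] {fα : α → ℤ} {fβ : β → ℤ} {fγ : γ → ℤ}

theorem gr_single_apply (g : (α → R) →ₗ[R] (β → R)) (i : α) (j : β) :
    gr fα fβ g (Pi.single i 1) j = if fβ j = fα i then g (Pi.single i 1) j else 0 := by
  simp [gr]

theorem gr_id : gr fα fα (LinearMap.id : (α → R) →ₗ[R] (α → R)) = LinearMap.id := by
  refine LinearMap.ext_single fun i => funext fun j => ?_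
  by_cases h : j = i <;> simp [gr_single_apply, h]

theorem gr_add (g g₁ : (α → R) →ₗ[R] (β → R)) :
    gr fα fβ (g + g₁) = gr fα fβ g + gr fα fβ g₁ := by
  refine LinearMap.ext_single fun i => funext fun j => ?_
  by_cases h : fβ j = fα i <;> simp [gr_single_apply, h]

theorem gr_comp [Fintype β] [DecidableEq β] {uα : α → ℤ} {uβ : β → ℤ} {uγ : γ → ℤ} {s t : ℤ}
    {g : (α → R) →ₗ[R] (β → R)} {g' : (β → R) →ₗ[R] (γ → R)}
    (hg : IsFilteredMap uα fα uβ fβ s g) (hg' : IsFilteredMap uβ fβ uγ fγ t g') :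
    gr fα fγ (g' ∘ₗ g) = gr fβ fγ g' ∘ₗ gr fα fβ g := by
  refine LinearMap.ext_single fun i => funext fun j => ?_
  rw [gr_single_apply, LinearMap.comp_single_apply, LinearMap.comp_single_apply]
  split_ifs with hji
  · refine Finset.sum_congr rfl fun m _ => ?_
    rw [gr_single_apply, gr_single_apply]
    by_cases h₁ : g (Pi.single i 1) m = 0
    · simp [h₁]
    by_cases h₂ : g' (Pi.single m 1) j = 0
    · simp [h₂]
    have := (hg i m h₁).2
    have := (hg' m j h₂).2
    rw [if_pos (by omega), if_pos (by omega)]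
  · refine (Finset.sum_eq_zero fun m _ => ?_).symm
    rw [gr_single_apply, gr_single_apply]
    split_ifs <;> first | omega | simp

theorem gr_eq_zero {g : (α → R) →ₗ[R] (β → R)}
    (hg : ∀ i j, g (Pi.single i 1) j ≠ 0 → fβ j < fα i) : gr fα fβ g = 0 := by
  refine LinearMap.ext_single fun i => funext fun j => ?_
  rw [gr_single_apply]
  split_ifs with h
  · by_contra hne
    exact (hg i j hne).ne h
  · rfl

end FilteredMap

section Bigraded

variable {k : Type*} [Field k] {ι : Type*} [Fintype ι] [DecidableEq ι]

theorem mem_bidegPiece_iff {u f : ι → ℤ} {n j : ℤ} {v : ι → k} :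
    v ∈ bidegPiece k u f n j ↔ ∀ m, v m ≠ 0 → u m = n ∧ f m = j := by
  have : {v : ι → k | ∃ i, u i = n ∧ f i = j ∧ v = Pi.single i 1} =
      Pi.basisFun k ι '' {i | u i = n ∧ f i = j} := by
    ext; simp [eq_comm, and_assoc]
  rw [bidegPiece, this, Module.Basis.mem_span_image]
  simp [Set.subset_def]

theorem finrank_bidegPiece (u f : ι → ℤ) (n j : ℤ) :
    Module.finrank k (bidegPiece k u f n j) = Nat.card {i : ι // u i = n ∧ f i = j} := by
  have : {v : ι → k | ∃ i, u i = n ∧ f i = j ∧ v = Pi.single i 1} =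
      Set.range (Pi.basisFun k ι ∘ Subtype.val (p := fun i => u i = n ∧ f i = j)) := by
    ext; simp [eq_comm, and_assoc]
  rw [bidegPiece, this, Nat.card_eq_fintype_card,
    finrank_span_eq_card ((Pi.basisFun k ι).linearIndependent.comp _ Subtype.val_injective)]

theorem IsFilteredMap.gr_mem_bidegPiece {ι' : Type*} [Fintype ι'] [DecidableEq ι']
    {u f : ι → ℤ} {u' f' : ι' → ℤ} {s : ℤ} {g : (ι → k) →ₗ[k] (ι' → k)}
    (hg : IsFilteredMap u f u' f' s g) {n j : ℤ} {v : ι → k} (hv : v ∈ bidegPiece k u f n j) :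
    gr f f' g v ∈ bidegPiece k u' f' (n + s) j := by
  rw [mem_bidegPiece_iff] at hv ⊢
  intro m hm
  rw [LinearMap.apply_eq_sum_single] at hm
  simp only [Finset.sum_apply, Pi.smul_apply, smul_eq_mul] at hm
  obtain ⟨i, -, hi⟩ := Finset.exists_ne_zero_of_sum_ne_zero hm
  have h₁ := hv i (left_ne_zero_of_mul hi)
  have h₂ := right_ne_zero_of_mul hi
  rw [gr_single_apply] at h₂
  split_ifs at h₂ with hf
  · have := (hg i m h₂).1
    omega
  · exact absurd rfl h₂

end Bigraded

section Cancellation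

variable {k V W : Type*} [Field k] [AddCommGroup V] [Module k V] [AddCommGroup W] [Module k W]
variable (d : V →ₗ[k] V) (ℓ : V →ₗ[k] k) (b : V)

/-- The homotopy contracting the pair `b`, `d b` of a complex, seen through a functional `ℓ`
that vanishes on `b` but not on `d b`. -/
def cancelHomotopy : V →ₗ[k] V := ℓ.smulRight (-(ℓ (d b))⁻¹ • b)

def cancelProj : V →ₗ[k] V :=
  LinearMap.id + d ∘ₗ cancelHomotopy d ℓ b + cancelHomotopy d ℓ b ∘ₗ d

variable {d ℓ b}

theorem cancelHomotopy_apply (v : V) : cancelHomotopy d ℓ b v = (-(ℓ (d b))⁻¹ * ℓ v) • b := by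
  simp [cancelHomotopy, smul_smul, mul_comm]

theorem cancelProj_apply (v : V) :
    cancelProj d ℓ b v = v + d (cancelHomotopy d ℓ b v) + cancelHomotopy d ℓ b (d v) := rfl

theorem cancelHomotopy_comp_self (hb : ℓ b = 0) :
    cancelHomotopy d ℓ b ∘ₗ cancelHomotopy d ℓ b = 0 := by
  ext v; simp [cancelHomotopy_apply, hb]

theorem cancelHomotopy_comp_comp (hx : ℓ (d b) ≠ 0) :
    cancelHomotopy d ℓ b ∘ₗ d ∘ₗ cancelHomotopy d ℓ b = -cancelHomotopy d ℓ b := by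
  ext v
  simp only [LinearMap.comp_apply, LinearMap.neg_apply, cancelHomotopy_apply, map_smul,
    smul_smul, ← neg_smul]
  congr 1
  field_simp

theorem apply_cancelProj (hb : ℓ b = 0) (hx : ℓ (d b) ≠ 0) (v : V) :
    ℓ (cancelProj d ℓ b v) = 0 := by
  simp only [cancelProj_apply, cancelHomotopy_apply, map_add, map_smul, hb, smul_eq_mul]
  field_simp
  ring

theorem cancelProj_self (hb : ℓ b = 0) (hx : ℓ (d b) ≠ 0) : cancelProj d ℓ b b = 0 := by
  simp [cancelProj_apply, cancelHomotopy_apply, hb, hx]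

variable {j : W →ₗ[k] V} {q : V →ₗ[k] W}

theorem cancelProj_idempotent (hd : d ∘ₗ d = 0) (hb : ℓ b = 0) (hx : ℓ (d b) ≠ 0) :
    IsIdempotentElem (cancelProj d ℓ b) :=
  isIdempotentElem_id_add_comp_add_comp hd (cancelHomotopy_comp_self hb)
    (cancelHomotopy_comp_comp hx)

theorem cancel_ψ_comp_φ (hd : d ∘ₗ d = 0) (hb : ℓ b = 0) (hx : ℓ (d b) ≠ 0)
    (hqj : q ∘ₗ j = LinearMap.id) (hℓj : ℓ ∘ₗ j = 0) (hqb : q b = 0) :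
    (q ∘ₗ cancelProj d ℓ b) ∘ₗ (cancelProj d ℓ b ∘ₗ j) = LinearMap.id := by
  refine LinearMap.ext fun w => ?_
  have hℓ : ℓ (j w) = 0 := LinearMap.congr_fun hℓj w
  rw [LinearMap.comp_apply, LinearMap.comp_apply, LinearMap.comp_apply, ← Module.End.mul_apply,
    (cancelProj_idempotent hd hb hx).eq, cancelProj_apply, cancelHomotopy_apply,
    cancelHomotopy_apply, hℓ]
  simpa [hqb] using LinearMap.congr_fun hqj w

theorem cancel_φ_comp_ψ_sub (hd : d ∘ₗ d = 0) (hb : ℓ b = 0) (hx : ℓ (d b) ≠ 0)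
    (hjq : ∀ v, ℓ v = 0 → ∃ c : k, j (q v) = v + c • b) :
    (cancelProj d ℓ b ∘ₗ j) ∘ₗ (q ∘ₗ cancelProj d ℓ b) - LinearMap.id
      = d ∘ₗ cancelHomotopy d ℓ b + cancelHomotopy d ℓ b ∘ₗ d := by
  refine LinearMap.ext fun v => ?_
  obtain ⟨c, hc⟩ := hjq _ (apply_cancelProj hb hx v)
  rw [LinearMap.sub_apply, LinearMap.comp_apply, LinearMap.comp_apply, LinearMap.comp_apply, hc,
    map_add, map_smul, cancelProj_self hb hx, smul_zero, add_zero, ← Module.End.mul_apply,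
    (cancelProj_idempotent hd hb hx).eq, cancelProj_apply]
  simp only [LinearMap.add_apply, LinearMap.comp_apply, LinearMap.id_apply]
  abel

end Cancellation

section FilteredReduction

variable {R : Type*} [Ring R] {ι ι₁ ι₂ : Type*} [DecidableEq ι] [DecidableEq ι₁] [DecidableEq ι₂]

structure FilteredReduction (u f : ι → ℤ) (d : (ι → R) →ₗ[R] (ι → R)) (u₁ f₁ : ι₁ → ℤ)
    (d₁ : (ι₁ → R) →ₗ[R] (ι₁ → R)) extends Reduction d d₁ where
  isFilteredMap_φ : IsFilteredMap u₁ f₁ u f 0 φ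
  isFilteredMap_ψ : IsFilteredMap u f u₁ f₁ 0 ψ
  isFilteredMap_H : IsFilteredMap u f u f 1 H

namespace FilteredReduction

variable {u f : ι → ℤ} {d : (ι → R) →ₗ[R] (ι → R)} {u₁ f₁ : ι₁ → ℤ}
  {d₁ : (ι₁ → R) →ₗ[R] (ι₁ → R)} {u₂ f₂ : ι₂ → ℤ} {d₂ : (ι₂ → R) →ₗ[R] (ι₂ → R)}

def ofHomotopy (φ : (ι₁ → R) →ₗ[R] (ι → R)) (ψ : (ι → R) →ₗ[R] (ι₁ → R))
    (H : (ι → R) →ₗ[R] (ι → R)) (hd : d ∘ₗ d = 0) (hψφ : ψ ∘ₗ φ = LinearMap.id)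
    (hφψ : φ ∘ₗ ψ - LinearMap.id = d ∘ₗ H + H ∘ₗ d) (hφ : IsFilteredMap u₁ f₁ u f 0 φ)
    (hψ : IsFilteredMap u f u₁ f₁ 0 ψ) (hH : IsFilteredMap u f u f 1 H) :
    FilteredReduction u f d u₁ f₁ (ψ ∘ₗ d ∘ₗ φ) where
  toReduction := .ofHomotopy d φ ψ H hd hψφ hφψ
  isFilteredMap_φ := hφ
  isFilteredMap_ψ := hψ
  isFilteredMap_H := hH

def trans [Fintype ι₁] (r₁ : FilteredReduction u f d u₁ f₁ d₁)
    (r₂ : FilteredReduction u₁ f₁ d₁ u₂ f₂ d₂) : FilteredReduction u f d u₂ f₂ d₂ where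
  toReduction := r₁.toReduction.trans r₂.toReduction
  isFilteredMap_φ := r₁.isFilteredMap_φ.comp r₂.isFilteredMap_φ
  isFilteredMap_ψ := r₂.isFilteredMap_ψ.comp r₁.isFilteredMap_ψ
  isFilteredMap_H :=
    r₁.isFilteredMap_H.add
      (r₁.isFilteredMap_φ.comp (r₂.isFilteredMap_H.comp r₁.isFilteredMap_ψ (n := 1)))

theorem isFilteredMap_d₁ [Fintype ι] [Fintype ι₁] (r : FilteredReduction u f d u₁ f₁ d₁)
    (hd : IsFilteredMap u f u f (-1) d) : IsFilteredMap u₁ f₁ u₁ f₁ (-1) d₁ := by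
  rw [r.eq_ψ_comp_d_comp_φ]
  exact r.isFilteredMap_ψ.comp (hd.comp r.isFilteredMap_φ (n := -1))

def relabel (e : ι₁ ≃ ι) (hd : d ∘ₗ d = 0) :
    FilteredReduction u f d (u ∘ e) (f ∘ e)
      (LinearMap.funLeft R R e ∘ₗ d ∘ₗ LinearMap.funLeft R R e.symm) :=
  .ofHomotopy _ _ 0 hd (by ext; simp [LinearMap.funLeft_apply]) (by ext; simp)
    (by simpa [Function.comp_assoc] using IsFilteredMap.funLeft e.symm (u ∘ e) (f ∘ e))
    (.funLeft e u f) .zero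

def toGr [Fintype ι] [Fintype ι₁] (r : FilteredReduction u f d u₁ f₁ d₁)
    (hd : IsFilteredMap u f u f (-1) d) : Reduction (gr f f d) (gr f₁ f₁ d₁) where
  φ := gr f₁ f r.φ
  ψ := gr f f₁ r.ψ
  H := gr f f r.H
  φ_comp_d := by
    rw [← gr_comp (r.isFilteredMap_d₁ hd) r.isFilteredMap_φ, r.φ_comp_d,
      gr_comp r.isFilteredMap_φ hd]
  ψ_comp_d := by
    rw [← gr_comp hd r.isFilteredMap_ψ, r.ψ_comp_d,
      gr_comp r.isFilteredMap_ψ (r.isFilteredMap_d₁ hd)]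
  ψ_comp_φ := by rw [← gr_comp r.isFilteredMap_φ r.isFilteredMap_ψ, r.ψ_comp_φ, gr_id]
  φ_comp_ψ_sub := by
    rw [← gr_comp r.isFilteredMap_ψ r.isFilteredMap_φ, ← gr_comp r.isFilteredMap_H hd,
      ← gr_comp hd r.isFilteredMap_H, ← gr_add, sub_eq_iff_eq_add, ← gr_id, ← gr_add,
      ← sub_eq_iff_eq_add.mp r.φ_comp_ψ_sub]

theorem card_eq_finrank_bidegHomology {k : Type*} [Field k] [Fintype ι] [Fintype ι₁]
    {d : (ι → k) →ₗ[k] (ι → k)} {d₁ : (ι₁ → k) →ₗ[k] (ι₁ → k)}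
    (r : FilteredReduction u f d u₁ f₁ d₁) (hd : IsFilteredMap u f u f (-1) d)
    (hd₁ : ∀ i j, d₁ (Pi.single i 1) j ≠ 0 → f₁ j < f₁ i) (n j : ℤ) :
    Nat.card {i : ι₁ // u₁ i = n ∧ f₁ i = j} =
      Module.finrank k (bidegHomology k u f (gr f f d) n j) := by
  rw [← finrank_bidegPiece (k := k)]
  refine ((r.toGr hd).homologyEquiv (gr_eq_zero hd₁) _ _ _ (fun w hw => ?_) (fun v hv => ?_)
    (fun v hv => r.isFilteredMap_H.gr_mem_bidegPiece hv)).finrank_eq.symm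
  · exact add_zero n ▸ r.isFilteredMap_φ.gr_mem_bidegPiece hw
  · exact add_zero n ▸ r.isFilteredMap_ψ.gr_mem_bidegPiece hv

end FilteredReduction

end FilteredReduction

theorem isFilteredMap_cancelHomotopy {k ι : Type*} [Field k] [DecidableEq ι] {u f : ι → ℤ}
    {d : (ι → k) →ₗ[k] (ι → k)} {i₀ j₀ : ι}
    (hu : u i₀ = u j₀ + 1) (hf : f i₀ ≤ f j₀) :
    IsFilteredMap u f u f 1 (cancelHomotopy d (LinearMap.proj j₀) (Pi.single i₀ 1)) := by
  intro i m h
  rw [cancelHomotopy_apply] at h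
  obtain rfl : i = j₀ := by
    by_contra hi; simp [Pi.single_eq_of_ne' hi] at h
  obtain rfl : m = i₀ := by
    by_contra hm; simp [hm] at h
  exact ⟨hu, hf⟩

section Elimination

variable {k : Type*} [Field k] {ι : Type*} [Fintype ι] [DecidableEq ι]

theorem exists_filteredReduction_cancel {u f : ι → ℤ} {d : (ι → k) →ₗ[k] (ι → k)}
    (hd : IsFilteredMap u f u f (-1) d) (hd2 : d ∘ₗ d = 0) {i₀ j₀ : ι} (hf : f j₀ = f i₀)
    (hx : d (Pi.single i₀ 1) j₀ ≠ 0) :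
    ∃ d' : ({m // m ≠ i₀ ∧ m ≠ j₀} → k) →ₗ[k] ({m // m ≠ i₀ ∧ m ≠ j₀} → k),
      Nonempty (FilteredReduction u f d (u ∘ Subtype.val) (f ∘ Subtype.val) d') := by
  have hdeg := hd i₀ j₀ hx
  have hne : j₀ ≠ i₀ := by rintro rfl; omega
  set ℓ : (ι → k) →ₗ[k] k := LinearMap.proj j₀
  set b : ι → k := Pi.single i₀ 1
  have hb : ℓ b = 0 := Pi.single_eq_of_ne hne 1
  set j := Function.ExtendByZero.linearMap k (Subtype.val : {m // m ≠ i₀ ∧ m ≠ j₀} → ι)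
  set q := LinearMap.funLeft k k (Subtype.val : {m // m ≠ i₀ ∧ m ≠ j₀} → ι)
  have hℓj : ℓ ∘ₗ j = 0 := by
    ext w; simp [ℓ, j]
  have hqb : q b = 0 := by
    ext m; simp [q, b, LinearMap.funLeft_apply, Pi.single_eq_of_ne m.2.1]
  have hjq (v : ι → k) (hv : ℓ v = 0) : ∃ c : k, j (q v) = v + c • b := by
    replace hv : v j₀ = 0 := hv
    refine ⟨-v i₀, funext fun m => ?_⟩
    rw [LinearMap.extendByZero_funLeft_val_apply]
    split_ifs with hm
    · simp [b, hm.1]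
    · obtain rfl | rfl : m = i₀ ∨ m = j₀ := by tauto
      · simp [b]
      · simp [b, hne, hv]
  have hh : IsFilteredMap u f u f 1 (cancelHomotopy d ℓ b) :=
    isFilteredMap_cancelHomotopy (by omega) hf.ge
  have hP : IsFilteredMap u f u f 0 (cancelProj d ℓ b) :=
    ((IsFilteredMap.id u f).add (hd.comp hh)).add (hh.comp hd)
  exact ⟨_, ⟨.ofHomotopy (cancelProj d ℓ b ∘ₗ j) (q ∘ₗ cancelProj d ℓ b) (cancelHomotopy d ℓ b)
    hd2 (cancel_ψ_comp_φ hd2 hb hx (LinearMap.funLeft_val_comp_extendByZero _) hℓj hqb)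
    (cancel_φ_comp_ψ_sub hd2 hb hx hjq) (hP.comp (.extendByZero u f))
    ((IsFilteredMap.funLeft _ u f).comp hP) hh⟩⟩

theorem exists_filteredReduction_strict {u f : ι → ℤ} {d : (ι → k) →ₗ[k] (ι → k)}
    (hd : IsFilteredMap u f u f (-1) d) (hd2 : d ∘ₗ d = 0) :
    ∃ (ι₁ : Type) (_ : Fintype ι₁) (_ : DecidableEq ι₁) (u₁ f₁ : ι₁ → ℤ)
      (d₁ : (ι₁ → k) →ₗ[k] (ι₁ → k)),
      (∀ i j, d₁ (Pi.single i 1) j ≠ 0 → f₁ j < f₁ i) ∧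
      Nonempty (FilteredReduction u f d u₁ f₁ d₁) := by
  induction h : Fintype.card ι using Nat.strong_induction_on generalizing ι with
  | _ n ih =>
  by_cases hpiv : ∃ i₀ j₀, f j₀ = f i₀ ∧ d (Pi.single i₀ 1) j₀ ≠ 0
  · obtain ⟨i₀, j₀, hf, hx⟩ := hpiv
    obtain ⟨d', ⟨r⟩⟩ := exists_filteredReduction_cancel hd hd2 hf hx
    obtain ⟨ι₁, hι₁, hι₁', u₁, f₁, d₁, hd₁, ⟨r'⟩⟩ :=
      ih _ (h ▸ Fintype.card_subtype_lt (x := i₀) (by simp)) (r.isFilteredMap_d₁ hd)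
        (r.comp_self_eq_zero hd2) rfl
    exact ⟨ι₁, hι₁, hι₁', u₁, f₁, d₁, hd₁, ⟨r.trans r'⟩⟩
  · push Not at hpiv
    -- nothing left to cancel; relabelling by `Fin` moves the complex to `Type`
    let e := (Fintype.equivFin ι).symm
    refine ⟨Fin (Fintype.card ι), inferInstance, inferInstance, _, _, _, fun a b hab => ?_,
      ⟨.relabel e hd2⟩⟩
    have hab' : d (Pi.single (e a) 1) (e b) ≠ 0 := by
      simpa [LinearMap.funLeft, Pi.single_comp_symm] using hab
    exact lt_of_le_of_ne (hd _ _ hab').2 fun hf => hab' (hpiv _ _ hf)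

end Elimination

theorem filtered_homotopy_equivalence_with_E1
    {k : Type*} [Field k] {ι : Type*} [Fintype ι] [DecidableEq ι]
    (u f : ι → ℤ)
    (d D0 : (ι → k) →ₗ[k] (ι → k))
    (hgrade : ∀ i j, d (Pi.single i 1) j ≠ 0 → u j = u i - 1 ∧ f j ≤ f i)
    (hd2 : d ∘ₗ d = 0)
    (hD0 : ∀ i j, D0 (Pi.single i 1) j = if f j = f i then d (Pi.single i 1) j else 0) :
    ∃ (ι₁ : Type) (_ : Fintype ι₁) (_ : DecidableEq ι₁) (u₁ f₁ : ι₁ → ℤ)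
      (dbar : (ι₁ → k) →ₗ[k] (ι₁ → k))
      (φ : (ι₁ → k) →ₗ[k] (ι → k)) (ψ : (ι → k) →ₗ[k] (ι₁ → k))
      (H : (ι → k) →ₗ[k] (ι → k)) (H' : (ι₁ → k) →ₗ[k] (ι₁ → k)),
      -- d̄ decreases the homological grading by 1 and strictly decreases the filtration
      (∀ i j, dbar (Pi.single i 1) j ≠ 0 → u₁ j = u₁ i - 1 ∧ f₁ j ≤ f₁ i - 1) ∧
      -- (C₁, d̄) is a complex
      dbar ∘ₗ dbar = 0 ∧
      -- the underlying bigraded vector space of C₁ is H(C, d₀)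
      (∀ n j : ℤ, Nat.card {i : ι₁ // u₁ i = n ∧ f₁ i = j} =
        Module.finrank k (bidegHomology k u f D0 n j)) ∧
      -- φ and ψ are chain maps
      φ ∘ₗ dbar = d ∘ₗ φ ∧
      ψ ∘ₗ d = dbar ∘ₗ ψ ∧
      -- φ and ψ preserve the homological grading and do not increase the filtration
      (∀ i j, φ (Pi.single i 1) j ≠ 0 → u j = u₁ i ∧ f j ≤ f₁ i) ∧
      (∀ i j, ψ (Pi.single i 1) j ≠ 0 → u₁ j = u i ∧ f₁ j ≤ f i) ∧
      -- the homotopies raise the homological grading by 1 and do not increase the filtration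
      (∀ i j, H (Pi.single i 1) j ≠ 0 → u j = u i + 1 ∧ f j ≤ f i) ∧
      (∀ i j, H' (Pi.single i 1) j ≠ 0 → u₁ j = u₁ i + 1 ∧ f₁ j ≤ f₁ i) ∧
      -- homotopy equations
      ψ ∘ₗ φ - LinearMap.id = dbar ∘ₗ H' + H' ∘ₗ dbar ∧
      φ ∘ₗ ψ - LinearMap.id = d ∘ₗ H + H ∘ₗ d := by
  have hd : IsFilteredMap u f u f (-1) d := fun i j h =>
    ⟨by linarith [(hgrade i j h).1], (hgrade i j h).2⟩
  obtain rfl : D0 = gr f f d :=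
    LinearMap.ext_single fun i => funext fun j => by rw [hD0, gr_single_apply]
  obtain ⟨ι₁, hι₁, hι₁', u₁, f₁, dbar, hstrict, ⟨r⟩⟩ := exists_filteredReduction_strict hd hd2
  refine ⟨ι₁, hι₁, hι₁', u₁, f₁, dbar, r.φ, r.ψ, r.H, 0, fun i j h => ?_,
    r.comp_self_eq_zero hd2, r.card_eq_finrank_bidegHomology hd hstrict, r.φ_comp_d,
    r.ψ_comp_d, fun i j h => by simpa using r.isFilteredMap_φ i j h,
    fun i j h => by simpa using r.isFilteredMap_ψ i j h, r.isFilteredMap_H, IsFilteredMap.zero,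
    by simp [r.ψ_comp_φ], r.φ_comp_ψ_sub⟩
  have := (r.isFilteredMap_d₁ hd i j h).1
  have := hstrict i j h
  omega
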